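/- arXiv:1909.11880 — 2 statements merged into one kernel-verified Lean document; each statement's English description precedes it below -/
import Mathlib

section
/- For every n, the word Wₙ does not occur in the infinite word W at any position j with 0 < j < |Wₙ|; that is, the first occurrence of Wₙ in W is at position 0 and every other occurrence is at a position ≥ |Wₙ|. -/
open Filter

/-- The Chacón words: `W₀ = 0`, `W_{n+1} = Wₙ Wₙ 1 Wₙ`. -/
def chaconWord : ℕ → List (Fin 2)
  | 0 => [0]
  | n + 1 => chaconWord n ++ chaconWord n ++ [1] ++ chaconWord n

/-- `W` is the infinite word having every `Wₙ` as an initial segment. -/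
def IsChaconInfWord (W : ℕ → Fin 2) : Prop :=
  ∀ n i, i < (chaconWord n).length → W i = (chaconWord n).getD i 0

/-- A finite word `α` occurs in a finite word `β` at position `j`. -/
def OccursAt (α β : List (Fin 2)) (j : ℕ) : Prop :=
  j + α.length ≤ β.length ∧ ∀ k < α.length, β.getD (j + k) 0 = α.getD k 0

/-- A finite word `α` occurs in the infinite word `W` at position `j`. -/
def OccursAtInf (W : ℕ → Fin 2) (α : List (Fin 2)) (j : ℕ) : Prop :=
  ∀ k < α.length, W (j + k) = α.getD k 0

/-- The subword of the infinite word `W` of length `L` beginning at position `i`. -/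
def subword (W : ℕ → Fin 2) (i L : ℕ) : List (Fin 2) :=
  (List.range L).map fun k => W (i + k)

/-- The (normalized) Hamming distance `d` of two finite words. -/
noncomputable def hamming (α β : List (Fin 2)) : ℝ :=
  (((Finset.range α.length).filter fun i => α.getD i 0 ≠ β.getD i 0).card : ℝ) / α.length

/-- The modified 0-Hamming distance `d₀` of two finite words. -/
noncomputable def hamming0 (α β : List (Fin 2)) : ℝ :=
  (((Finset.range α.length).filter fun i => α.getD i 0 = 0 ∧ β.getD i 0 = 1).card : ℝ) /
    (((Finset.range α.length).filter fun i => α.getD i 0 = 0).card : ℝ)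

namespace ChaconAux

/-- `W` agrees with the word `α` starting at position `i`. -/
def SegEq (W : ℕ → Fin 2) (i : ℕ) (α : List (Fin 2)) : Prop :=
  ∀ k < α.length, W (i + k) = α.getD k 0

lemma segEq_append {W : ℕ → Fin 2} {i : ℕ} {α β : List (Fin 2)} :
    SegEq W i (α ++ β) ↔ SegEq W i α ∧ SegEq W (i + α.length) β := by
  constructor
  · intro h
    refine ⟨fun k hk => ?_, fun k hk => ?_⟩
    · have := h k (by simp; omega)
      rwa [List.getD_append _ _ _ _ hk] at this
    · have := h (α.length + k) (by simp; omega)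
      rw [List.getD_append_right _ _ _ _ (by omega)] at this
      rw [show α.length + k - α.length = k by omega] at this
      rwa [← add_assoc] at this
  · rintro ⟨h1, h2⟩ k hk
    rcases lt_or_ge k α.length with h | h
    · rw [List.getD_append _ _ _ _ h]; exact h1 k h
    · rw [List.getD_append_right _ _ _ _ h]
      have := h2 (k - α.length) (by simp at hk; omega)
      rwa [show i + α.length + (k - α.length) = i + k by omega] at this

lemma segEq_single {W : ℕ → Fin 2} {i : ℕ} {a : Fin 2} :
    SegEq W i [a] ↔ W i = a := by
  constructor
  · intro h
    have := h 0 (by simp)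
    simpa using this
  · intro h k hk
    simp only [List.length_cons, List.length_nil] at hk
    have hk0 : k = 0 := by omega
    subst hk0
    simpa using h

lemma segEq_transfer {W : ℕ → Fin 2} {i j t : ℕ} {α β : List (Fin 2)}
    (hi : SegEq W i α) (hj : SegEq W j α) (hocc : SegEq W (i + t) β)
    (hlen : t + β.length ≤ α.length) : SegEq W (j + t) β := by
  intro k hk
  have h1 : W (j + (t + k)) = α.getD (t + k) 0 := hj (t + k) (by omega)
  have h2 : W (i + (t + k)) = α.getD (t + k) 0 := hi (t + k) (by omega)
  have h3 : W (i + t + k) = β.getD k 0 := hocc k hk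
  rw [show j + t + k = j + (t + k) by omega, h1, ← h2,
    show i + (t + k) = i + t + k by omega, h3]

end ChaconAux

namespace ChaconAux

lemma chacon_len (n : ℕ) : (chaconWord (n+1)).length = 3 * (chaconWord n).length + 1 := by
  simp [chaconWord]; omega

lemma chacon_len_pos (n : ℕ) : 0 < (chaconWord n).length := by
  induction n with
  | zero => simp [chaconWord]
  | succ n ih => rw [chacon_len]; omega

lemma chacon_getD_zero (n : ℕ) : (chaconWord n).getD 0 0 = 0 := by
  induction n with
  | zero => rfl
  | succ n ih =>
    rw [chaconWord]
    rw [List.getD_append _ _ _ _ (by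
      simp only [List.length_append, List.length_cons, List.length_nil]
      have := chacon_len_pos n; omega)]
    rw [List.getD_append _ _ _ _ (by
      simp only [List.length_append, List.length_cons, List.length_nil]
      have := chacon_len_pos n; omega)]
    rw [List.getD_append _ _ _ _ (chacon_len_pos n)]
    exact ih

lemma chacon_getD_last (n : ℕ) :
    (chaconWord n).getD ((chaconWord n).length - 1) 0 = 0 := by
  induction n with
  | zero => rfl
  | succ n ih =>
    have hL := chacon_len_pos n
    rw [chacon_len, chaconWord]
    rw [List.getD_append_right _ _ _ _ (by simp; omega)]
    have : 3 * (chaconWord n).length + 1 - 1 -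
        (chaconWord n ++ chaconWord n ++ [1]).length = (chaconWord n).length - 1 := by
      simp; omega
    rw [this]
    exact ih

lemma segEq_chacon_succ {W : ℕ → Fin 2} {p n : ℕ} :
    SegEq W p (chaconWord (n+1)) ↔
      SegEq W p (chaconWord n) ∧ SegEq W (p + (chaconWord n).length) (chaconWord n) ∧
      W (p + 2 * (chaconWord n).length) = 1 ∧
      SegEq W (p + 2 * (chaconWord n).length + 1) (chaconWord n) := by
  have e1 : (chaconWord n ++ chaconWord n).length = 2 * (chaconWord n).length := by
    simp only [List.length_append]; omega
  have e2 : ((chaconWord n ++ chaconWord n) ++ [(1 : Fin 2)]).length =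
      2 * (chaconWord n).length + 1 := by
    simp only [List.length_append, List.length_cons, List.length_nil]; omega
  rw [chaconWord]
  rw [segEq_append, segEq_append, segEq_append, segEq_single, e1, e2]
  rw [show p + (2 * (chaconWord n).length + 1) = p + 2 * (chaconWord n).length + 1 by omega]
  tauto

lemma segEq_prefix {W : ℕ → Fin 2} (hW : IsChaconInfWord W) (m : ℕ) :
    SegEq W 0 (chaconWord m) := by
  intro k hk
  rw [Nat.zero_add]
  exact hW m k hk

lemma key (W : ℕ → Fin 2) (hW : IsChaconInfWord W) (n : ℕ) :
    (∀ t, 0 < t → t < (chaconWord n).length → ¬ SegEq W t (chaconWord n)) ∧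
    (∀ t, 0 < t → t < (chaconWord n).length + 1 →
      ¬ SegEq W ((chaconWord n).length + t) (chaconWord n)) := by
  induction n with
  | zero =>
    constructor
    · intro t ht0 ht1 _
      simp [chaconWord] at ht1
      omega
    · intro t ht0 ht hocc
      have hlen0 : (chaconWord 0).length = 1 := rfl
      rw [hlen0] at ht hocc
      have ht1 : t = 1 := by omega
      subst ht1
      have h1 : W 2 = (0 : Fin 2) := by
        have := hocc 0 (by simp [chaconWord])
        simpa [chaconWord] using this
      have h2 : W 2 = (1 : Fin 2) := by
        have := hW 1 2 (by simp [chaconWord])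
        rw [this]
        decide
      rw [h1] at h2
      exact absurd h2 (by decide)
  | succ n ih =>
    obtain ⟨P, Q⟩ := ih
    have hLpos := chacon_len_pos n
    have hL := chacon_len n
    set L := (chaconWord n).length with hLdef
    set A := chaconWord n with hAdef
    -- block facts from the prefix W_{n+2}
    have hpre := segEq_prefix hW (n+2)
    rw [segEq_chacon_succ] at hpre
    obtain ⟨hB0, hB1, hO, hB2⟩ := hpre
    rw [Nat.zero_add, hL] at hB1
    rw [Nat.zero_add, hL, show 2 * (3 * L + 1) = 6 * L + 2 by ring] at hO
    rw [Nat.zero_add, hL, show 2 * (3 * L + 1) + 1 = 6 * L + 3 by ring] at hB2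
    rw [segEq_chacon_succ] at hB0 hB1 hB2
    obtain ⟨a0, a1, o1, a2⟩ := hB0
    obtain ⟨a3, a4, o2, a5⟩ := hB1
    obtain ⟨a6, a7, o4, a8⟩ := hB2
    simp only [← hAdef, ← hLdef] at a0 a1 o1 a2 a3 a4 o2 a5 a6 a7 o4 a8
    rw [Nat.zero_add] at a1 o1 a2
    rw [show (3 * L + 1) + L = 4 * L + 1 by ring] at a4
    rw [show (3 * L + 1) + 2 * L = 5 * L + 1 by ring] at o2
    rw [show (3 * L + 1) + 2 * L + 1 = 5 * L + 2 by ring] at a5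
    rw [show (6 * L + 3) + L = 7 * L + 3 by ring] at a7
    -- point values
    have hlast : A.getD (L - 1) 0 = 0 := by
      rw [hLdef, hAdef]; exact chacon_getD_last n
    have hzero : A.getD 0 0 = 0 := by
      rw [hAdef]; exact chacon_getD_zero n
    have z3L : W (3 * L) = 0 := by
      have h := a2 (L - 1) (by omega)
      rw [show 2 * L + 1 + (L - 1) = 3 * L by omega] at h
      rw [h, hlast]
    have z4L1 : W (4 * L + 1) = 0 := by
      have h := a4 0 (by omega)
      rw [Nat.add_zero] at h
      rw [h, hzero]
    have z6L1 : W (6 * L + 1) = 0 := by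
      have h := a5 (L - 1) (by omega)
      rw [show 5 * L + 2 + (L - 1) = 6 * L + 1 by omega] at h
      rw [h, hlast]
    have z7L2 : W (7 * L + 2) = 0 := by
      have h := a6 (L - 1) (by omega)
      rw [show 6 * L + 3 + (L - 1) = 7 * L + 2 by omega] at h
      rw [h, hlast]
    have hAAlen : (A ++ A).length = 2 * L := by
      simp only [List.length_append]; omega
    have hXlen : ((A ++ [(1 : Fin 2)]) ++ A).length = 2 * L + 1 := by
      simp only [List.length_append, List.length_cons, List.length_nil]; omega
    -- composite segments
    have AA0 : SegEq W 0 (A ++ A) := by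
      rw [segEq_append, Nat.zero_add, ← hLdef]
      exact ⟨a0, a1⟩
    have AA2 : SegEq W (2 * L + 1) (A ++ A) := by
      rw [segEq_append, show 2 * L + 1 + A.length = 3 * L + 1 by omega]
      exact ⟨a2, a3⟩
    have AA3 : SegEq W (3 * L + 1) (A ++ A) := by
      rw [segEq_append, show 3 * L + 1 + A.length = 4 * L + 1 by omega]
      exact ⟨a3, a4⟩
    have X1 : SegEq W L ((A ++ [(1 : Fin 2)]) ++ A) := by
      rw [segEq_append, segEq_append, segEq_single]
      rw [show L + A.length = 2 * L by omega]
      rw [show L + (A ++ [(1 : Fin 2)]).length = 2 * L + 1 by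
        simp only [List.length_append, List.length_cons, List.length_nil]; omega]
      exact ⟨⟨a1, o1⟩, a2⟩
    have X4 : SegEq W (4 * L + 1) ((A ++ [(1 : Fin 2)]) ++ A) := by
      rw [segEq_append, segEq_append, segEq_single]
      rw [show 4 * L + 1 + A.length = 5 * L + 1 by omega]
      rw [show 4 * L + 1 + (A ++ [(1 : Fin 2)]).length = 5 * L + 2 by
        simp only [List.length_append, List.length_cons, List.length_nil]; omega]
      exact ⟨⟨a4, o2⟩, a5⟩
    have X5 : SegEq W (5 * L + 2) ((A ++ [(1 : Fin 2)]) ++ A) := by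
      rw [segEq_append, segEq_append, segEq_single]
      rw [show 5 * L + 2 + A.length = 6 * L + 2 by omega]
      rw [show 5 * L + 2 + (A ++ [(1 : Fin 2)]).length = 6 * L + 3 by
        simp only [List.length_append, List.length_cons, List.length_nil]; omega]
      exact ⟨⟨a5, hO⟩, a6⟩
    constructor
    · -- P (n+1)
      intro t ht0 htM hocc
      rw [hL] at htM
      rw [segEq_chacon_succ] at hocc
      obtain ⟨c1, c2, c3, c4⟩ := hocc
      simp only [← hAdef, ← hLdef] at c1 c2 c3 c4
      rcases Nat.lt_or_ge t L with h1 | h1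
      · exact P t ht0 h1 c1
      rcases Nat.eq_or_lt_of_le h1 with h2 | h2
      · rw [show t + 2 * L = 3 * L by omega, z3L] at c3
        exact absurd c3 (by decide)
      rcases Nat.lt_or_ge t (2 * L + 1) with h3 | h3
      · refine Q (t - L) (by omega) (by omega) ?_
        rwa [show L + (t - L) = t by omega]
      rcases Nat.eq_or_lt_of_le h3 with h4 | h4
      · rw [show t + 2 * L = 4 * L + 1 by omega, z4L1] at c3
        exact absurd c3 (by decide)
      · have hocc' : SegEq W (2 * L + 1 + (t - (2 * L + 1))) A := by
          rwa [show 2 * L + 1 + (t - (2 * L + 1)) = t by omega]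
        have := segEq_transfer AA2 AA0 hocc' (by rw [hAAlen]; omega)
        rw [Nat.zero_add] at this
        exact P (t - (2 * L + 1)) (by omega) (by omega) this
    · -- Q (n+1)
      intro t ht0 ht hocc
      rw [hL] at ht hocc
      rw [segEq_chacon_succ] at hocc
      obtain ⟨c1, c2, c3, c4⟩ := hocc
      simp only [← hAdef, ← hLdef] at c1 c2 c3 c4
      rcases Nat.lt_or_ge t L with h1 | h1
      · have hocc' : SegEq W (3 * L + 1 + t) A := c1
        have := segEq_transfer AA3 AA0 hocc' (by rw [hAAlen]; omega)
        rw [Nat.zero_add] at this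
        exact P t ht0 h1 this
      rcases Nat.eq_or_lt_of_le h1 with h2 | h2
      · rw [show 3 * L + 1 + t + 2 * L = 6 * L + 1 by omega, z6L1] at c3
        exact absurd c3 (by decide)
      rcases Nat.lt_or_ge t (2 * L + 1) with h3 | h3
      · have hocc' : SegEq W (4 * L + 1 + (t - L)) A := by
          rwa [show 4 * L + 1 + (t - L) = 3 * L + 1 + t by omega]
        have := segEq_transfer X4 X1 hocc' (by rw [hXlen]; omega)
        exact Q (t - L) (by omega) (by omega) this
      rcases Nat.eq_or_lt_of_le h3 with h4 | h4
      · rw [show 3 * L + 1 + t + 2 * L = 7 * L + 2 by omega, z7L2] at c3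
        exact absurd c3 (by decide)
      rcases Nat.lt_or_ge t (3 * L + 1) with h5 | h5
      · have hocc' : SegEq W (5 * L + 2 + (t - (2 * L + 1))) A := by
          rwa [show 5 * L + 2 + (t - (2 * L + 1)) = 3 * L + 1 + t by omega]
        have := segEq_transfer X5 X1 hocc' (by rw [hXlen]; omega)
        exact Q (t - (2 * L + 1)) (by omega) (by omega) this
      · have h6 : t = 3 * L + 1 := by omega
        have h := c1 0 (by omega)
        rw [Nat.add_zero, h6, show 3 * L + 1 + (3 * L + 1) = 6 * L + 2 by ring] at h
        rw [hzero] at h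
        rw [h] at hO
        exact absurd hO (by decide)

end ChaconAux

theorem chacon_first_occurrence (W : ℕ → Fin 2) (hW : IsChaconInfWord W) (n j : ℕ)
    (hj0 : 0 < j) (hjn : j < (chaconWord n).length) :
    ¬ OccursAtInf W (chaconWord n) j := by
  intro hocc
  exact (ChaconAux.key W hW n).1 j hj0 hjn (fun k hk => hocc k hk)
end

section
/- For every n and every i with 0 < i < |Wₙ|, the subword of W of length |Wₙ| beginning at position i equals the suffix of Wₙ of length |Wₙ| − i followed by the prefix of Wₙ of length i; in particular, this subword contains exactly 3ⁿ occurrences of the letter 0, the same number as Wₙ. -/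
open Filter

/-! Since `W_{n+1}` begins with `Wₙ Wₙ`, the window of length `|Wₙ|` of `W` at a position
`i ≤ |Wₙ|` lies inside `Wₙ Wₙ`, where it is the rotation of `Wₙ` by `i`; a rotation is a
permutation, so it has as many zeros as `Wₙ`, namely `3ⁿ`. -/

lemma chaconWord_succ (n : ℕ) :
    chaconWord (n + 1) = (chaconWord n ++ chaconWord n) ++ ([1] ++ chaconWord n) := by
  simp [chaconWord]

lemma count_zero_chaconWord (n : ℕ) : (chaconWord n).count 0 = 3 ^ n := by
  induction n with
  | zero => decide
  | succ n ih =>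
    have h10 : List.count (0 : Fin 2) [1] = 0 := by decide
    rw [chaconWord_succ, List.count_append, List.count_append, List.count_append, ih, h10,
      pow_succ]
    ring

lemma subword_eq_take_drop {W : ℕ → Fin 2} {u : List (Fin 2)}
    (hu : ∀ j < u.length, W j = u.getD j 0) {i L : ℕ} (h : i + L ≤ u.length) :
    subword W i L = (u.drop i).take L := by
  apply List.ext_getElem
  · simp [subword]; omega
  · intro k hk _
    simp only [subword, List.getElem_map, List.getElem_range, List.getElem_take,
      List.getElem_drop]
    rw [hu _ (by simp [subword] at hk; omega), List.getD_eq_getElem]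

lemma take_length_drop_append_self {α : Type*} (l : List α) {i : ℕ} (hi : i ≤ l.length) :
    ((l ++ l).drop i).take l.length = l.rotate i := by
  rw [List.rotate_eq_drop_append_take hi, List.drop_append_of_le_length hi, List.take_append,
    List.take_of_length_le (by simp), List.length_drop, Nat.sub_sub_self hi]

lemma IsChaconInfWord.apply_eq_getD_append_self {W : ℕ → Fin 2} (hW : IsChaconInfWord W)
    (n j : ℕ) (hj : j < (chaconWord n ++ chaconWord n).length) :
    W j = (chaconWord n ++ chaconWord n).getD j 0 := by
  rw [hW (n + 1) j (by rw [chaconWord_succ]; simp at hj ⊢; omega), chaconWord_succ,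
    List.getD_append _ _ _ _ hj]

lemma IsChaconInfWord.subword_eq_rotate {W : ℕ → Fin 2} (hW : IsChaconInfWord W)
    {n i : ℕ} (hi : i ≤ (chaconWord n).length) :
    subword W i (chaconWord n).length = (chaconWord n).rotate i := by
  rw [subword_eq_take_drop (hW.apply_eq_getD_append_self n) (by simp; omega),
    take_length_drop_append_self _ hi]

theorem chacon_shifted_subword_general (W : ℕ → Fin 2) (hW : IsChaconInfWord W) (n i : ℕ)
    (hin : i < (chaconWord n).length) :
    subword W i (chaconWord n).length = (chaconWord n).drop i ++ (chaconWord n).take i ∧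
      (subword W i (chaconWord n).length).count 0 = 3 ^ n := by
  rw [hW.subword_eq_rotate hin.le, ← List.rotate_eq_drop_append_take hin.le]
  exact ⟨rfl, ((List.rotate_perm _ i).count_eq 0).trans (count_zero_chaconWord n)⟩

theorem chacon_shifted_subword (W : ℕ → Fin 2) (hW : IsChaconInfWord W) (n i : ℕ)
    (hi0 : 0 < i) (hin : i < (chaconWord n).length) :
    subword W i (chaconWord n).length = (chaconWord n).drop i ++ (chaconWord n).take i ∧
      (subword W i (chaconWord n).length).count 0 = 3 ^ n :=
  chacon_shifted_subword_general W hW n i hin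
end
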